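/- Let E be a connected component of {z : |P(z)| ≤ 1} for a polynomial P of degree n, and suppose every critical point ζ ∈ E of P satisfies P(ζ) = 0. Then all zeros of P lying in E coincide: E contains exactly one distinct zero of P. -/

import Mathlib

/-!
For zeros `a ≠ b` in `E`, let `t₀` be the least level `t` such that `b` lies in the component of
`{|P| ≤ t}` containing `a`; it is attained because these components are compact and connected, and
`t₀ > 0` because `{|P| ≤ 0}` is finite. Every point of this component on the level `|P| = t₀` is a
regular point of `P`, so by the inverse function theorem `{|P| < t₀}` is connected near it and
accumulates at it. Hence the component lies in the closure of a single component of `{|P| < t₀}`,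
an open connected set containing `a` and `b`; a path joining them there has `max |P| < t₀`,
contradicting minimality. A zero exists in `E` because at a point where `|P|` is minimal on `E`
and nonzero, `P` would be regular and `|P|` could decrease inside `E`.
-/

open Set Filter Topology Polynomial

section Topology

variable {X : Type*} [TopologicalSpace X]

theorem IsPreconnected.subset_of_eventually_mem {s c : Set X} (hs : IsPreconnected s)
    (hc : IsClosed c) (hsc : (s ∩ c).Nonempty)
    (hloc : ∀ x ∈ s ∩ c, ∀ᶠ y in 𝓝 x, y ∈ s → y ∈ c) : s ⊆ c := by
  intro y hys
  by_contra hyc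
  obtain ⟨z, hzs, hzu, hzc⟩ := hs {x | ∀ᶠ y in 𝓝 x, y ∈ s → y ∈ c} cᶜ
    isOpen_setOfPred_eventually_nhds hc.isOpen_compl
    (fun x hx => (em (x ∈ c)).imp (fun h => hloc x ⟨hx, h⟩) id)
    (hsc.mono fun x hx => ⟨hx.1, hloc x hx⟩) ⟨y, hys, hyc⟩
  exact hzc (hzu.self_of_nhds hzs)

theorem IsClosed.connectedComponentIn {F : Set X} (hF : IsClosed F) (x : X) :
    IsClosed (connectedComponentIn F x) := by
  by_cases hx : x ∈ F
  · exact closure_subset_iff_isClosed.1 <|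
      isPreconnected_connectedComponentIn.closure.subset_connectedComponentIn
        (subset_closure (mem_connectedComponentIn hx))
        (hF.closure_subset_iff.2 (connectedComponentIn_subset F x))
  · rw [connectedComponentIn_eq_empty hx]
    exact isClosed_empty

theorem IsOpen.mem_connectedComponentIn_of_mem_closure [LocallyConnectedSpace X] {F : Set X}
    (hF : IsOpen F) {x y : X} (hy : y ∈ F) (hyx : y ∈ closure (connectedComponentIn F x)) :
    y ∈ connectedComponentIn F x := by
  obtain ⟨q, hqy, hqx⟩ :=
    mem_closure_iff.1 hyx _ hF.connectedComponentIn (mem_connectedComponentIn hy)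
  rw [connectedComponentIn_eq hqx, ← connectedComponentIn_eq hqy]
  exact mem_connectedComponentIn hy

theorem IsPreconnected.iInter_of_directed [T2Space X] {ι : Type*} [Nonempty ι] {K : ι → Set X}
    (hdir : Directed (· ⊇ ·) K) (hK : ∀ i, IsCompact (K i)) (hKc : ∀ i, IsPreconnected (K i)) :
    IsPreconnected (⋂ i, K i) := by
  rw [isPreconnected_iff_subset_of_disjoint_closed]
  intro u v hu hv huv hdisj
  obtain ⟨i₀⟩ := ‹Nonempty ι›
  have hC : IsCompact (⋂ i, K i) :=
    (hK i₀).of_isClosed_subset (isClosed_iInter fun i => (hK i).isClosed) (iInter_subset K i₀)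
  obtain ⟨U, V, hU, hV, huU, hvV, hUV⟩ := SeparatedNhds.of_isCompact_isCompact
    (hC.inter_right hu) (hC.inter_right hv) <| by
      rw [disjoint_iff_inter_eq_empty, ← hdisj]
      ext x; simp only [mem_inter_iff]; tauto
  obtain ⟨i, hi⟩ := exists_subset_nhds_of_isCompact hdir hK (U := U ∪ V) fun x hx =>
    (huv hx).elim (fun h => mem_of_superset (hU.mem_nhds (huU ⟨hx, h⟩)) subset_union_left)
      (fun h => mem_of_superset (hV.mem_nhds (hvV ⟨hx, h⟩)) subset_union_right)
  have hCi : ⋂ i, K i ⊆ K i := iInter_subset K i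
  rcases (hKc i).subset_or_subset hU hV hUV hi with h | h
  · exact Or.inl fun x hx => (huv hx).resolve_right fun hxv =>
      hUV.ne_of_mem (h (hCi hx)) (hvV ⟨hx, hxv⟩) rfl
  · exact Or.inr fun x hx => (huv hx).resolve_left fun hxu =>
      hUV.ne_of_mem (huU ⟨hx, hxu⟩) (h (hCi hx)) rfl

end Topology

theorem HasStrictFDerivAt.exists_isOpen_isPreconnected_inter_preimage_convex
    {𝕜 E F : Type*} [NontriviallyNormedField 𝕜] [NormedAddCommGroup E] [NormedSpace 𝕜 E]
    [CompleteSpace E] [NormedAddCommGroup F] [NormedSpace 𝕜 F] [NormedSpace ℝ F]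
    {f : E → F} {f' : E ≃L[𝕜] F} {a : E} (hf : HasStrictFDerivAt f (f' : E →L[𝕜] F) a) :
    ∃ U, IsOpen U ∧ a ∈ U ∧ ∀ C : Set F, Convex ℝ C → IsPreconnected (U ∩ f ⁻¹' C) := by
  set e := hf.toOpenPartialHomeomorph f
  obtain ⟨δ, hδ, hball⟩ :=
    Metric.isOpen_iff.1 e.open_target (f a) hf.image_mem_toOpenPartialHomeomorph_target
  refine ⟨e.source ∩ f ⁻¹' Metric.ball (f a) δ,
    e.isOpen_inter_preimage Metric.isOpen_ball, ⟨hf.mem_toOpenPartialHomeomorph_source,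
      Metric.mem_ball_self hδ⟩, fun C hC => ?_⟩
  -- `f` maps `U` homeomorphically onto a ball, so `U ∩ f ⁻¹' C` is the image of a convex set
  have himage : e.symm '' (Metric.ball (f a) δ ∩ C) =
      e.source ∩ f ⁻¹' Metric.ball (f a) δ ∩ f ⁻¹' C := by
    rw [← inter_eq_right.2 (inter_subset_left.trans hball), e.symm_image_target_inter_eq,
      e.source_inter_preimage_target_inter, preimage_inter, ← inter_assoc]
    rfl
  rw [← himage]
  exact ((convex_ball _ _).inter hC).isPreconnected.image _
    (e.continuousOn_symm.mono (inter_subset_left.trans hball))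

namespace Polynomial

variable {P : ℂ[X]}

theorem norm_eval_le_of_mem_connectedComponentIn {t : ℝ} {a z : ℂ}
    (hz : z ∈ connectedComponentIn {z : ℂ | ‖P.eval z‖ ≤ t} a) : ‖P.eval z‖ ≤ t :=
  connectedComponentIn_subset {z : ℂ | ‖P.eval z‖ ≤ t} a hz

theorem connectedComponentIn_setOf_norm_eval_le_mono {s t : ℝ} (hst : s ≤ t) (a : ℂ) :
    connectedComponentIn {z : ℂ | ‖P.eval z‖ ≤ s} a ⊆
      connectedComponentIn {z : ℂ | ‖P.eval z‖ ≤ t} a :=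
  connectedComponentIn_mono a fun _ hz => le_trans hz hst

theorem isCompact_connectedComponentIn_setOf_norm_eval_le (hP : P.natDegree ≠ 0) (t : ℝ)
    (z₀ : ℂ) : IsCompact (connectedComponentIn {z : ℂ | ‖P.eval z‖ ≤ t} z₀) := by
  have hS : IsClosed {z : ℂ | ‖P.eval z‖ ≤ t} := isClosed_le P.continuous.norm continuous_const
  obtain ⟨K, hK, hKc⟩ := mem_cocompact.1 <|
    (P.tendsto_norm_atTop (natDegree_pos_iff_degree_pos.1 (Nat.pos_of_ne_zero hP))
      tendsto_norm_cocompact_atTop).eventually_gt_atTop t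
  refine hK.of_isClosed_subset (hS.connectedComponentIn z₀) fun z hz => ?_
  by_contra hzK
  exact (hKc hzK).not_ge (norm_eval_le_of_mem_connectedComponentIn hz)

theorem setOf_norm_eval_le_subset_closure (hP : P.natDegree ≠ 0) {t : ℝ} (ht : t ≠ 0) :
    {z : ℂ | ‖P.eval z‖ ≤ t} ⊆ closure {z : ℂ | ‖P.eval z‖ < t} := by
  have h := (P.isOpenQuotientMap_eval hP).isOpenMap.preimage_closure_subset_closure_preimage
    (s := Metric.ball 0 t)
  rw [closure_ball 0 ht] at h
  simpa [Set.preimage] using h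

theorem exists_isOpen_isPreconnected_inter_setOf_norm_eval_lt {z : ℂ}
    (hz : P.derivative.eval z ≠ 0) :
    ∃ U, IsOpen U ∧ z ∈ U ∧ ∀ t : ℝ, IsPreconnected (U ∩ {w : ℂ | ‖P.eval w‖ < t}) := by
  obtain ⟨U, hU, hzU, hconv⟩ := ((P.hasStrictDerivAt z).hasStrictFDerivAt_equiv
    hz).exists_isOpen_isPreconnected_inter_preimage_convex
  exact ⟨U, hU, hzU, fun t => by simpa [Set.preimage] using hconv _ (convex_ball (0 : ℂ) t)⟩

theorem exists_eval_eq_zero_mem_connectedComponentIn (hP : P.natDegree ≠ 0) {t : ℝ} {z₀ : ℂ}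
    (hz₀ : ‖P.eval z₀‖ ≤ t)
    (hcrit : ∀ ζ ∈ connectedComponentIn {z : ℂ | ‖P.eval z‖ ≤ t} z₀,
      P.derivative.eval ζ = 0 → P.eval ζ = 0) :
    ∃ a ∈ connectedComponentIn {z : ℂ | ‖P.eval z‖ ≤ t} z₀, P.eval a = 0 := by
  obtain ⟨a, haK, hmin⟩ := (isCompact_connectedComponentIn_setOf_norm_eval_le hP t z₀)
    |>.exists_isMinOn ⟨z₀, mem_connectedComponentIn hz₀⟩ P.continuous.norm.continuousOn
  refine ⟨a, haK, by_contra fun ha => ?_⟩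
  obtain ⟨U, hU, haU, hpre⟩ :=
    exists_isOpen_isPreconnected_inter_setOf_norm_eval_lt (mt (hcrit a haK) ha)
  set G := U ∩ {w : ℂ | ‖P.eval w‖ < ‖P.eval a‖}
  have haG : a ∈ closure G := hU.inter_closure
    ⟨haU, setOf_norm_eval_le_subset_closure hP (norm_ne_zero_iff.2 ha)
      (show ‖P.eval a‖ ≤ ‖P.eval a‖ from le_rfl)⟩
  have hGK : insert a G ⊆ connectedComponentIn {z : ℂ | ‖P.eval z‖ ≤ t} z₀ := by
    rw [connectedComponentIn_eq haK]
    have hat : ‖P.eval a‖ ≤ t := norm_eval_le_of_mem_connectedComponentIn haK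
    refine ((hpre _).subset_closure (subset_insert a G) (insert_subset haG subset_closure))
      |>.subset_connectedComponentIn (mem_insert a G) (insert_subset hat fun x hx => ?_)
    exact hx.2.le.trans hat
  obtain ⟨x, hx⟩ := closure_nonempty_iff.1 ⟨a, haG⟩
  exact (isMinOn_iff.1 hmin x (hGK (mem_insert_of_mem a hx))).not_gt hx.2

theorem mem_connectedComponentIn_setOf_norm_eval_le_of_forall_lt (hP : P.natDegree ≠ 0)
    {t₀ : ℝ} {a b : ℂ} (h : ∀ t, t₀ < t → b ∈ connectedComponentIn {z : ℂ | ‖P.eval z‖ ≤ t} a) :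
    b ∈ connectedComponentIn {z : ℂ | ‖P.eval z‖ ≤ t₀} a := by
  set K : Ioi t₀ → Set ℂ := fun t => connectedComponentIn {z : ℂ | ‖P.eval z‖ ≤ t} a
  have hdir : Directed (· ⊇ ·) K := fun s t => ⟨min s t,
    connectedComponentIn_setOf_norm_eval_le_mono (min_le_left s t) a,
    connectedComponentIn_setOf_norm_eval_le_mono (min_le_right s t) a⟩
  have hpre : IsPreconnected (⋂ t, K t) := .iInter_of_directed hdir
    (fun t => isCompact_connectedComponentIn_setOf_norm_eval_le hP t a)
    fun t => isPreconnected_connectedComponentIn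
  have ha : a ∈ ⋂ t, K t := mem_iInter.2 fun t =>
    mem_connectedComponentIn (connectedComponentIn_nonempty_iff.1 ⟨b, h t t.2⟩)
  refine hpre.subset_connectedComponentIn ha (fun z hz => ?_) (mem_iInter.2 fun t => h t t.2)
  exact le_of_forall_gt_imp_ge_of_dense fun t ht =>
    norm_eval_le_of_mem_connectedComponentIn (mem_iInter.1 hz ⟨t, ht⟩)

theorem connectedComponentIn_setOf_norm_eval_le_subset_closure (hP : P.natDegree ≠ 0) {t : ℝ}
    (ht : 0 < t) {a : ℂ} (ha : ‖P.eval a‖ < t)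
    (hreg : ∀ z ∈ connectedComponentIn {z : ℂ | ‖P.eval z‖ ≤ t} a,
      ‖P.eval z‖ = t → P.derivative.eval z ≠ 0) :
    connectedComponentIn {z : ℂ | ‖P.eval z‖ ≤ t} a ⊆
      closure (connectedComponentIn {z : ℂ | ‖P.eval z‖ < t} a) := by
  set W := {z : ℂ | ‖P.eval z‖ < t}
  have hW : IsOpen W := isOpen_lt P.continuous.norm continuous_const
  set V := connectedComponentIn W a
  refine isPreconnected_connectedComponentIn.subset_of_eventually_mem isClosed_closure
    ⟨a, mem_connectedComponentIn ha.le, subset_closure (mem_connectedComponentIn ha)⟩ ?_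
  rintro x ⟨hxK, hxV⟩
  rcases (norm_eval_le_of_mem_connectedComponentIn hxK).lt_or_eq with hlt | heq
  · have hx : x ∈ V := hW.mem_connectedComponentIn_of_mem_closure hlt hxV
    filter_upwards [hW.connectedComponentIn.mem_nhds hx] with y hy _ using subset_closure hy
  · obtain ⟨U, hU, hxU, hpre⟩ :=
      exists_isOpen_isPreconnected_inter_setOf_norm_eval_lt (hreg x hxK heq)
    obtain ⟨q, hqU, hqV⟩ := mem_closure_iff.1 hxV U hU hxU
    -- near a regular point of the level set, `W` is connected, hence lies in a single component
    have hUV : U ∩ W ⊆ V := by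
      rw [show V = connectedComponentIn W q from connectedComponentIn_eq hqV]
      exact (hpre t).subset_connectedComponentIn ⟨hqU, connectedComponentIn_subset _ _ hqV⟩
        inter_subset_right
    filter_upwards [hU.mem_nhds hxU] with y hyU hyK
    exact closure_mono hUV <| hU.inter_closure ⟨hyU,
      setOf_norm_eval_le_subset_closure hP ht.ne' (connectedComponentIn_subset _ _ hyK)⟩

theorem exists_lt_mem_connectedComponentIn_setOf_norm_eval_le (hP : P.natDegree ≠ 0) {t : ℝ}
    (ht : 0 < t) {a b : ℂ} (ha : ‖P.eval a‖ < t) (hb : ‖P.eval b‖ < t)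
    (hreg : ∀ z ∈ connectedComponentIn {z : ℂ | ‖P.eval z‖ ≤ t} a,
      ‖P.eval z‖ = t → P.derivative.eval z ≠ 0)
    (hab : b ∈ connectedComponentIn {z : ℂ | ‖P.eval z‖ ≤ t} a) :
    ∃ s < t, b ∈ connectedComponentIn {z : ℂ | ‖P.eval z‖ ≤ s} a := by
  set W := {z : ℂ | ‖P.eval z‖ < t}
  have hW : IsOpen W := isOpen_lt P.continuous.norm continuous_const
  have hbV : b ∈ connectedComponentIn W a := hW.mem_connectedComponentIn_of_mem_closure hb
    (connectedComponentIn_setOf_norm_eval_le_subset_closure hP ht ha hreg hab)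
  obtain ⟨γ, hγ⟩ := (hW.connectedComponentIn.isConnected_iff_isPathConnected.1
    (isConnected_connectedComponentIn_iff.2 ha)).joinedIn a (mem_connectedComponentIn ha) b hbV
  obtain ⟨_, ⟨s, rfl⟩, hmax⟩ := (isCompact_range γ.continuous).exists_isMaxOn
    (range_nonempty γ) P.continuous.norm.continuousOn
  refine ⟨‖P.eval (γ s)‖, connectedComponentIn_subset W a (hγ s), ?_⟩
  exact (isConnected_range γ.continuous).isPreconnected.subset_connectedComponentIn
    ⟨0, γ.source⟩ (fun y hy => isMaxOn_iff.1 hmax y hy) ⟨1, γ.target⟩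

theorem eq_of_mem_connectedComponentIn_setOf_norm_eval_le (hP : P.natDegree ≠ 0) {t : ℝ}
    {a b : ℂ} (ha : P.eval a = 0) (hb : P.eval b = 0)
    (hcrit : ∀ ζ ∈ connectedComponentIn {z : ℂ | ‖P.eval z‖ ≤ t} a,
      P.derivative.eval ζ = 0 → P.eval ζ = 0)
    (hab : b ∈ connectedComponentIn {z : ℂ | ‖P.eval z‖ ≤ t} a) : b = a := by
  set T := {s : ℝ | b ∈ connectedComponentIn {z : ℂ | ‖P.eval z‖ ≤ s} a}
  have hT : ∀ s ∈ T, 0 ≤ s := fun s hs => by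
    simpa [ha] using connectedComponentIn_nonempty_iff.1 ⟨b, hs⟩
  have hTbdd : BddBelow T := ⟨0, hT⟩
  have hinf : sInf T ∈ T := mem_connectedComponentIn_setOf_norm_eval_le_of_forall_lt hP
    fun s hs => by
      obtain ⟨r, hr, hrs⟩ := exists_lt_of_csInf_lt ⟨t, hab⟩ hs
      exact connectedComponentIn_setOf_norm_eval_le_mono hrs.le a hr
  rcases (hT _ hinf).lt_or_eq with hpos | hzero
  · have hreg : ∀ z ∈ connectedComponentIn {z : ℂ | ‖P.eval z‖ ≤ sInf T} a,
        ‖P.eval z‖ = sInf T → P.derivative.eval z ≠ 0 := fun z hz heq hz' => by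
      rw [hcrit z (connectedComponentIn_setOf_norm_eval_le_mono (csInf_le hTbdd hab) a hz) hz',
        norm_zero] at heq
      exact hpos.ne heq
    obtain ⟨s, hs, hsT⟩ := exists_lt_mem_connectedComponentIn_setOf_norm_eval_le hP hpos
      (by simpa [ha]) (by simpa [hb]) hreg hinf
    exact absurd (csInf_le hTbdd hsT) (not_le.2 hs)
  · -- at level `0` the sublevel set is the finite set of roots
    by_contra hne
    have hfin : (connectedComponentIn {z : ℂ | ‖P.eval z‖ ≤ sInf T} a).Finite :=
      (P.finite_setOfPred_isRoot fun h => hP (by simp [h])).subset fun z hz => by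
        simpa [← hzero] using norm_eval_le_of_mem_connectedComponentIn hz
    exact isPreconnected_connectedComponentIn.infinite_of_nontrivial
      ⟨b, hinf, a, mem_connectedComponentIn (by simp [ha, ← hzero]), hne⟩ hfin

end Polynomial

theorem lemniscate_component_unique_zero
    (n : ℕ) (hn : 1 ≤ n) (P : Polynomial ℂ) (hdeg : P.natDegree = n)
    (z₀ : ℂ) (hz₀ : ‖P.eval z₀‖ ≤ 1)
    (E : Set ℂ) (hE : E = connectedComponentIn {z : ℂ | ‖P.eval z‖ ≤ 1} z₀)
    (hcrit : ∀ ζ ∈ E, P.derivative.eval ζ = 0 → P.eval ζ = 0) :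
    ∃! a : ℂ, a ∈ E ∧ P.eval a = 0 := by
  have hP : P.natDegree ≠ 0 := by omega
  subst hE
  obtain ⟨a, haE, ha⟩ := exists_eval_eq_zero_mem_connectedComponentIn hP hz₀ hcrit
  rw [connectedComponentIn_eq haE] at hcrit ⊢
  exact ⟨a, ⟨mem_connectedComponentIn (connectedComponentIn_subset _ _ haE), ha⟩,
    fun b ⟨hbE, hb⟩ => eq_of_mem_connectedComponentIn_setOf_norm_eval_le hP ha hb hcrit hbE⟩
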